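/- arXiv:1511.04271 — 3 statements merged into one kernel-verified Lean document; each statement's English description precedes it below -/
import Mathlib

section
/- Under the standing hypotheses on f, for every closed element k of C it holds that f(k) = f(⊥) ⊔ ◇_f(k). (Proposition 4.9(1).) -/
/-- An element is completely join-prime. -/
def CJPrime {C : Type*} [CompleteLattice C] (j : C) : Prop :=
  j ≠ ⊥ ∧ ∀ S : Set C, j ≤ sSup S → ∃ s ∈ S, j ≤ s

/-- An element is completely meet-prime. -/
def CMPrime {C : Type*} [CompleteLattice C] (m : C) : Prop :=
  m ≠ ⊤ ∧ ∀ S : Set C, sInf S ≤ m → ∃ s ∈ S, s ≤ m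

/-- ◇_f(u) = ⋁ { f j | j completely join-prime, j ≤ u }. -/
def diam {C D : Type*} [CompleteLattice C] [CompleteLattice D]
    (f : C → D) (u : C) : D :=
  sSup (f '' {j | CJPrime j ∧ j ≤ u})

/-- ■_f(v) = ⋁ { j | j completely join-prime, f j ≤ v }. -/
def bsq {C D : Type*} [CompleteLattice C] [CompleteLattice D]
    (f : C → D) (v : D) : C :=
  sSup {j | CJPrime j ∧ f j ≤ v}

/-- □_g(u) = ⋀ { g m | m completely meet-prime, u ≤ m }. -/
def boxg {C D : Type*} [CompleteLattice C] [CompleteLattice D]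
    (g : C → D) (u : C) : D :=
  sInf (g '' {m | CMPrime m ∧ u ≤ m})

/-- ◆_g(v) = ⋀ { m | m completely meet-prime, v ≤ g m }. -/
def bdiam {C D : Type*} [CompleteLattice C] [CompleteLattice D]
    (g : C → D) (v : D) : C :=
  sInf {m | CMPrime m ∧ v ≤ g m}

/-- Every element is the sup of the completely join-primes below it. -/
def JoinPerfect (C : Type*) [CompleteLattice C] : Prop :=
  ∀ u : C, u = sSup {j | CJPrime j ∧ j ≤ u}

/-- Every element is the inf of the completely meet-primes above it. -/
def MeetPerfect (C : Type*) [CompleteLattice C] : Prop :=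
  ∀ u : C, u = sInf {m | CMPrime m ∧ u ≤ m}

/-- `(C, e)` is a canonical extension of the bounded distributive lattice `A`. -/
structure IsCanonicalExtension {A C : Type*} [DistribLattice A] [BoundedOrder A]
    [CompleteLattice C] (e : A → C) : Prop where
  injective : Function.Injective e
  map_bot : e ⊥ = ⊥
  map_top : e ⊤ = ⊤
  map_inf : ∀ a b : A, e (a ⊓ b) = e a ⊓ e b
  map_sup : ∀ a b : A, e (a ⊔ b) = e a ⊔ e b
  dense_joinOfMeets : ∀ u : C, ∃ 𝒮 : Set (Set A),
      u = sSup ((fun S => sInf (e '' S)) '' 𝒮)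
  dense_meetOfJoins : ∀ u : C, ∃ 𝒮 : Set (Set A),
      u = sInf ((fun S => sSup (e '' S)) '' 𝒮)
  compact : ∀ S T : Set A, sInf (e '' S) ≤ sSup (e '' T) →
      ∃ F : Finset A, ↑F ⊆ S ∧ ∃ G : Finset A, ↑G ⊆ T ∧ F.inf id ≤ G.sup id

/-- Closed elements of the canonical extension: meets of subsets of `e(A)`. -/
def ClosedElem {A C : Type*} [CompleteLattice C] (e : A → C) (x : C) : Prop :=
  ∃ S : Set A, x = sInf (e '' S)

/-- Open elements of the canonical extension: joins of subsets of `e(A)`. -/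
def OpenElem {A C : Type*} [CompleteLattice C] (e : A → C) (x : C) : Prop :=
  ∃ S : Set A, x = sSup (e '' S)

/-- Nonempty downward-directed family. -/
def DownDir {C : Type*} [Preorder C] (𝒞 : Set C) : Prop :=
  𝒞.Nonempty ∧ ∀ x ∈ 𝒞, ∀ y ∈ 𝒞, ∃ z ∈ 𝒞, z ≤ x ∧ z ≤ y

/-- Nonempty upward-directed family. -/
def UpDir {C : Type*} [Preorder C] (𝒪 : Set C) : Prop :=
  𝒪.Nonempty ∧ ∀ x ∈ 𝒪, ∀ y ∈ 𝒪, ∃ z ∈ 𝒪, x ≤ z ∧ y ≤ z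

/-- `h` preserves down-directed meets of closed elements. -/
def ClosedEsakia {A C D : Type*} [CompleteLattice C] [CompleteLattice D]
    (e : A → C) (h : C → D) : Prop :=
  ∀ 𝒞 : Set C, DownDir 𝒞 → (∀ c ∈ 𝒞, ClosedElem e c) →
    h (sInf 𝒞) = sInf (h '' 𝒞)

/-- `h` preserves up-directed joins of open elements. -/
def OpenEsakia {A C D : Type*} [CompleteLattice C] [CompleteLattice D]
    (e : A → C) (h : C → D) : Prop :=
  ∀ 𝒪 : Set C, UpDir 𝒪 → (∀ o ∈ 𝒪, OpenElem e o) →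
    h (sSup 𝒪) = sSup (h '' 𝒪)

/-! Since `D` is join-perfect, it suffices to show that a completely join-prime `p ≤ f k`
with `p ≰ f ⊥` lies below some `f j` with `j ≤ k` completely join-prime. The elements
`a` with `p ≰ f (e a)` form an ideal of `A` (by additivity of `f` and primeness of `p`), disjoint
from the filter `{a | k ≤ e a}`. A prime ideal `J` separating them yields the closed element
`j = ⋀ e(A ∖ J)`, which is completely join-prime by compactness and denseness, lies below `k`
because `k` is closed, and satisfies `p ≤ f j` because `f` is closed Esakia. -/

open Set

section CompleteLattice

variable {C : Type*} [CompleteLattice C]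

theorem CJPrime.le_or_le_of_le_sup {j x y : C} (hj : CJPrime j) (h : j ≤ x ⊔ y) :
    j ≤ x ∨ j ≤ y := by
  obtain ⟨s, rfl | rfl, hjs⟩ := hj.2 {x, y} (by rwa [sSup_pair])
  exacts [.inl hjs, .inr hjs]

theorem cjPrime_of_forall_le_or_le {j m : C} (hjm : ¬ j ≤ m) (h : ∀ x, j ≤ x ∨ x ≤ m) :
    CJPrime j := by
  refine ⟨fun hj => hjm (hj ▸ bot_le), fun S hS => ?_⟩
  by_contra! hno
  exact hjm (hS.trans (sSup_le fun s hs => (h s).resolve_left (hno s hs)))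

theorem Monotone.diam_le {D : Type*} [CompleteLattice D] {f : C → D} (hf : Monotone f)
    (u : C) : diam f u ≤ f u :=
  sSup_le <| by rintro _ ⟨j, ⟨-, hju⟩, rfl⟩; exact hf hju

end CompleteLattice

theorem Order.PFilter.downDir_image {A C : Type*} [Preorder A] [Preorder C] {e : A → C}
    (he : Monotone e) (F : Order.PFilter A) : DownDir (e '' F) := by
  refine ⟨F.nonempty.image e, ?_⟩
  rintro _ ⟨a, ha, rfl⟩ _ ⟨b, hb, rfl⟩
  obtain ⟨c, hc, hca, hcb⟩ := F.directed a ha b hb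
  exact ⟨e c, mem_image_of_mem e hc, he hca, he hcb⟩

theorem isIdeal_setOf_not_le {A D : Type*} [SemilatticeSup A] [OrderBot A] [CompleteLattice D]
    {g : A → D} (hg : Monotone g) (hsub : ∀ a b, g (a ⊔ b) ≤ g a ⊔ g b) {p : D}
    (hp : CJPrime p) (hp_bot : ¬ p ≤ g ⊥) : Order.IsIdeal {a | ¬ p ≤ g a} where
  IsLowerSet _ _ hba ha hb := ha (hb.trans (hg hba))
  Nonempty := ⟨⊥, hp_bot⟩
  Directed a ha b hb :=
    ⟨a ⊔ b, fun h => (hp.le_or_le_of_le_sup (h.trans (hsub a b))).elim ha hb,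
      le_sup_left, le_sup_right⟩

namespace IsCanonicalExtension

variable {A C : Type*} [DistribLattice A] [BoundedOrder A] [CompleteLattice C] {e : A → C}

theorem monotone (he : IsCanonicalExtension e) : Monotone e := fun a b hab =>
  calc e a = e (a ⊓ b) := by rw [inf_eq_left.mpr hab]
    _ = e a ⊓ e b := he.map_inf a b
    _ ≤ e b := inf_le_right

theorem isPFilter_setOf_le (he : IsCanonicalExtension e) (x : C) :
    Order.IsPFilter {a | x ≤ e a} :=
  Order.IsPFilter.of_def ⟨⊤, by simp [he.map_top]⟩
    (fun a ha b hb => ⟨a ⊓ b, by simp_all [he.map_inf], inf_le_left, inf_le_right⟩)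
    (fun hab ha => ha.trans (he.monotone hab))

theorem not_sInf_le_sSup (he : IsCanonicalExtension e) (IF : Order.Ideal.PrimePair A) :
    ¬ sInf (e '' IF.F) ≤ sSup (e '' IF.I) := by
  intro hle
  obtain ⟨G, hGF, H, hHI, hGH⟩ := he.compact _ _ hle
  have hG : G.inf id ∈ IF.F :=
    Finset.inf_mem _ IF.F.top_mem (fun _ hx _ hy => IF.F.inf_mem hx hy) G id hGF
  have hH : H.sup id ∈ IF.I :=
    Finset.sup_mem _ IF.I.bot_mem (fun _ hx _ hy => IF.I.sup_mem hx hy) H id hHI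
  exact disjoint_left.mp IF.disjoint (IF.I.lower hGH hH) hG

theorem sInf_le_or_le_sSup_compl (he : IsCanonicalExtension e) (U : Set A) (x : C) :
    sInf (e '' U) ≤ x ∨ x ≤ sSup (e '' Uᶜ) := by
  obtain ⟨𝒮, rfl⟩ := he.dense_joinOfMeets x
  by_cases hU : ∃ S ∈ 𝒮, S ⊆ U
  · obtain ⟨S, hS, hSU⟩ := hU
    exact .inl ((sInf_le_sInf (image_mono hSU)).trans (le_sSup (mem_image_of_mem _ hS)))
  · refine .inr (sSup_le ?_)
    rintro _ ⟨S, hS, rfl⟩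
    obtain ⟨a, haS, haU⟩ := not_subset.mp fun hSU => hU ⟨S, hS, hSU⟩
    exact (sInf_le (mem_image_of_mem e haS)).trans (le_sSup (mem_image_of_mem e haU))

theorem cjPrime_sInf_image (he : IsCanonicalExtension e) (IF : Order.Ideal.PrimePair A) :
    CJPrime (sInf (e '' IF.F)) :=
  cjPrime_of_forall_le_or_le (he.not_sInf_le_sSup IF) fun x => by
    simpa only [IF.compl_F_eq_I] using he.sInf_le_or_le_sSup_compl IF.F x

theorem map_sInf_image {D : Type*} [CompleteLattice D] (he : IsCanonicalExtension e)
    {f : C → D} (hf : ClosedEsakia e f) (F : Order.PFilter A) :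
    f (sInf (e '' F)) = sInf (f '' (e '' F)) :=
  hf _ (F.downDir_image he.monotone) (by rintro _ ⟨a, -, rfl⟩; exact ⟨{a}, by simp⟩)

theorem exists_cjPrime_le_and_le_map {D : Type*} [CompleteLattice D]
    (he : IsCanonicalExtension e) {f : C → D} (hf : Monotone f) (hfc : ClosedEsakia e f)
    (hadd : ∀ a b : A, f (e (a ⊔ b)) ≤ f (e a) ⊔ f (e b)) {k : C} (hk : ClosedElem e k)
    {p : D} (hp : CJPrime p) (hpk : p ≤ f k) (hp_bot : ¬ p ≤ f ⊥) :
    ∃ j, CJPrime j ∧ j ≤ k ∧ p ≤ f j := by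
  obtain ⟨S, rfl⟩ := hk
  have hI := isIdeal_setOf_not_le (hf.comp he.monotone) hadd hp (by simpa [he.map_bot])
  have hF := he.isPFilter_setOf_le (sInf (e '' S))
  obtain ⟨J, hJ, hIJ, hFJ⟩ :=
    DistribLattice.prime_ideal_of_disjoint_filter_ideal (F := hF.toPFilter) (I := hI.toIdeal)
      (disjoint_left.mpr fun a ha hna => hna (hpk.trans (hf ha)))
  refine ⟨_, he.cjPrime_sInf_image hJ.toPrimePair, sInf_le_sInf (image_mono fun a ha => ?_), ?_⟩
  · exact disjoint_left.mp hFJ (sInf_le (mem_image_of_mem e ha))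
  · rw [he.map_sInf_image hfc]
    refine le_sInf ?_
    rintro _ ⟨_, ⟨a, ha, rfl⟩, rfl⟩
    by_contra hna
    exact ha (hIJ hna)

end IsCanonicalExtension

theorem stmt5_general {A C D : Type*} [DistribLattice A] [BoundedOrder A]
    [CompleteLattice C] [CompleteLattice D]
    (eA : A → C)
    (hceA : IsCanonicalExtension eA)
    (hDj : JoinPerfect D)
    (f : C → D) (hf : Monotone f)
    (hfcE : ClosedEsakia eA f)
    (hadd : ∀ a b : A, f (eA (a ⊔ b)) ≤ f (eA a) ⊔ f (eA b)) :
    ∀ k : C, ClosedElem eA k → f k = f ⊥ ⊔ diam f k := by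
  intro k hk
  refine le_antisymm ?_ (sup_le (hf bot_le) (hf.diam_le k))
  refine (hDj (f k)).trans_le (sSup_le fun p ⟨hp, hpk⟩ => ?_)
  by_cases hp_bot : p ≤ f ⊥
  · exact le_sup_of_le_left hp_bot
  obtain ⟨j, hj, hjk, hpj⟩ := hceA.exists_cjPrime_le_and_le_map hf hfcE hadd hk hp hpk hp_bot
  exact le_sup_of_le_right (hpj.trans (le_sSup ⟨j, ⟨hj, hjk⟩, rfl⟩))

/-- Proposition 4.9(1): under the standing hypotheses on `f`,
`f k = f ⊥ ⊔ ◇_f k` for every closed `k`. -/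
theorem stmt5 {A B C D : Type*} [DistribLattice A] [BoundedOrder A]
    [DistribLattice B] [BoundedOrder B] [CompleteLattice C] [CompleteLattice D]
    (eA : A → C) (eB : B → D)
    (hceA : IsCanonicalExtension eA) (hceB : IsCanonicalExtension eB)
    (hCj : JoinPerfect C) (hCm : MeetPerfect C)
    (hDj : JoinPerfect D) (hDm : MeetPerfect D)
    (f : C → D) (hf : Monotone f)
    (hfcE : ClosedEsakia eA f) (hfoE : OpenEsakia eA f)
    (hcl : ∀ a : A, ClosedElem eB (f (eA a)))
    (hadd : ∀ a b : A, f (eA (a ⊔ b)) ≤ f (eA a) ⊔ f (eA b)) :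
    ∀ k : C, ClosedElem eA k → f k = f ⊥ ⊔ diam f k :=
  stmt5_general eA hceA hDj f hf hfcE hadd
end

section
/- Under the standing hypotheses on f, for every u ∈ C it holds that f(u) = f(⊥) ⊔ ◇_f(u). (Proposition 4.7, identity (11).) -/
/-!
By meet-perfectness of `D` it suffices to show `f u ≤ m` for every completely meet-prime `m`
above `f ⊥ ⊔ ◇_f u`. The set `W = {a | f (e a) ≤ m}` contains `⊥` and, by the additivity
hypothesis, is closed under joins, so `e '' W` is an up-directed family of open elements and
open Esakia gives `f (⋁ e '' W) ≤ m`. It remains to see `u ≤ ⋁ e '' W`. Each completely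
join-prime `j ≤ u` is closed, hence the down-directed meet of `e '' {a | j ≤ e a}`; closed
Esakia turns `f j ≤ m` into `⋀ f (e a) ≤ m`, and meet-primeness of `m` picks one `a` with
`j ≤ e a` and `a ∈ W`. Join-perfectness of `C` concludes.
-/

section CanonicalExtension

variable {A C : Type*} [CompleteLattice C] {e : A → C}

lemma closedElem_apply (e : A → C) (a : A) : ClosedElem e (e a) := ⟨{a}, by simp⟩

lemma openElem_apply (e : A → C) (a : A) : OpenElem e (e a) := ⟨{a}, by simp⟩

lemma ClosedElem.eq_sInf_image {x : C} (hx : ClosedElem e x) :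
    x = sInf (e '' {a | x ≤ e a}) := by
  obtain ⟨S, rfl⟩ := hx
  refine le_antisymm (le_sInf ?_) (sInf_le_sInf (Set.image_mono fun a ha => ?_))
  · rintro _ ⟨a, ha, rfl⟩
    exact ha
  · exact sInf_le (Set.mem_image_of_mem e ha)

variable [DistribLattice A] [BoundedOrder A]

lemma CJPrime.closedElem (hce : IsCanonicalExtension e) {j : C} (hj : CJPrime j) :
    ClosedElem e j := by
  obtain ⟨𝒮, h𝒮⟩ := hce.dense_joinOfMeets j
  obtain ⟨_, ⟨S, hS, rfl⟩, hjS⟩ := hj.2 _ h𝒮.le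
  exact ⟨S, le_antisymm hjS (h𝒮 ▸ le_sSup ⟨S, hS, rfl⟩)⟩

lemma IsCanonicalExtension.downDir_image (hce : IsCanonicalExtension e) {S : Set A}
    (hne : S.Nonempty) (hS : InfClosed S) : DownDir (e '' S) := by
  refine ⟨hne.image e, ?_⟩
  rintro _ ⟨a, ha, rfl⟩ _ ⟨b, hb, rfl⟩
  exact ⟨e (a ⊓ b), Set.mem_image_of_mem e (hS ha hb), by simp [hce.map_inf]⟩

lemma IsCanonicalExtension.upDir_image (hce : IsCanonicalExtension e) {S : Set A}
    (hne : S.Nonempty) (hS : SupClosed S) : UpDir (e '' S) := by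
  refine ⟨hne.image e, ?_⟩
  rintro _ ⟨a, ha, rfl⟩ _ ⟨b, hb, rfl⟩
  exact ⟨e (a ⊔ b), Set.mem_image_of_mem e (hS ha hb), by simp [hce.map_sup]⟩

lemma IsCanonicalExtension.downDir_image_setOf_le (hce : IsCanonicalExtension e) (x : C) :
    DownDir (e '' {a | x ≤ e a}) :=
  hce.downDir_image ⟨⊤, by simp [hce.map_top]⟩
    fun a ha b hb => by simpa [hce.map_inf] using And.intro ha hb

end CanonicalExtension

section Diamond

variable {A C D : Type*} [DistribLattice A] [BoundedOrder A] [CompleteLattice C]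
  [CompleteLattice D] {e : A → C} {f : C → D}

lemma le_diam {j u : C} (hj : CJPrime j) (hju : j ≤ u) : f j ≤ diam f u :=
  le_sSup ⟨j, ⟨hj, hju⟩, rfl⟩

lemma Monotone.sup_diam_le (hf : Monotone f) (u : C) : f ⊥ ⊔ diam f u ≤ f u :=
  sup_le (hf bot_le) (sSup_le fun _ ⟨_, ⟨_, hju⟩, hfj⟩ => hfj ▸ hf hju)

lemma ClosedEsakia.exists_le_apply_of_cmPrime (hce : IsCanonicalExtension e)
    (hfc : ClosedEsakia e f) {j : C} {m : D} (hj : CJPrime j) (hm : CMPrime m)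
    (hjm : f j ≤ m) : ∃ a, j ≤ e a ∧ f (e a) ≤ m := by
  have hclosed : ∀ c ∈ e '' {a | j ≤ e a}, ClosedElem e c := by
    rintro _ ⟨a, -, rfl⟩
    exact closedElem_apply e a
  have hfj : f j = sInf (f '' (e '' {a | j ≤ e a})) := by
    rw [← hfc _ (hce.downDir_image_setOf_le j) hclosed, ← (hj.closedElem hce).eq_sInf_image]
  obtain ⟨_, ⟨_, ⟨a, hja, rfl⟩, rfl⟩, hfa⟩ := hm.2 _ (hfj ▸ hjm)
  exact ⟨a, hja, hfa⟩

lemma apply_le_of_cmPrime (hce : IsCanonicalExtension e) (hC : JoinPerfect C)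
    (hf : Monotone f) (hfc : ClosedEsakia e f) (hfo : OpenEsakia e f)
    (hadd : ∀ a b : A, f (e (a ⊔ b)) ≤ f (e a) ⊔ f (e b)) {u : C} {m : D} (hm : CMPrime m)
    (hbot : f ⊥ ≤ m) (hu : ∀ j, CJPrime j → j ≤ u → f j ≤ m) : f u ≤ m := by
  set W := {a | f (e a) ≤ m}
  have hW : UpDir (e '' W) :=
    hce.upDir_image ⟨⊥, by simpa [W, hce.map_bot]⟩ fun a ha b hb =>
      (hadd a b).trans (sup_le ha hb)
  have hu_le : u ≤ sSup (e '' W) :=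
    calc u = sSup {j | CJPrime j ∧ j ≤ u} := hC u
      _ ≤ sSup (e '' W) := sSup_le fun j ⟨hj, hju⟩ => by
          obtain ⟨a, hja, hfa⟩ := hfc.exists_le_apply_of_cmPrime hce hj hm (hu j hj hju)
          exact hja.trans (le_sSup (Set.mem_image_of_mem e hfa))
  calc f u ≤ f (sSup (e '' W)) := hf hu_le
    _ = sSup (f '' (e '' W)) := hfo _ hW (by rintro _ ⟨a, -, rfl⟩; exact openElem_apply e a)
    _ ≤ m := sSup_le (by rintro _ ⟨_, ⟨a, ha, rfl⟩, rfl⟩; exact ha)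

lemma le_sup_diam (hce : IsCanonicalExtension e) (hC : JoinPerfect C) (hD : MeetPerfect D)
    (hf : Monotone f) (hfc : ClosedEsakia e f) (hfo : OpenEsakia e f)
    (hadd : ∀ a b : A, f (e (a ⊔ b)) ≤ f (e a) ⊔ f (e b)) (u : C) :
    f u ≤ f ⊥ ⊔ diam f u := by
  rw [hD (f ⊥ ⊔ diam f u)]
  exact le_sInf fun m ⟨hm, hle⟩ => apply_le_of_cmPrime hce hC hf hfc hfo hadd hm
    (le_sup_left.trans hle) fun j hj hju => (le_diam hj hju).trans (le_sup_right.trans hle)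

end Diamond

theorem stmt9_general {A C D : Type*} [DistribLattice A] [BoundedOrder A]
    [CompleteLattice C] [CompleteLattice D]
    (eA : A → C)
    (hceA : IsCanonicalExtension eA)
    (hCj : JoinPerfect C)
    (hDm : MeetPerfect D)
    (f : C → D) (hf : Monotone f)
    (hfcE : ClosedEsakia eA f) (hfoE : OpenEsakia eA f)
    (hadd : ∀ a b : A, f (eA (a ⊔ b)) ≤ f (eA a) ⊔ f (eA b)) :
    ∀ u : C, f u = f ⊥ ⊔ diam f u := fun u =>
  (le_sup_diam hceA hCj hDm hf hfcE hfoE hadd u).antisymm (hf.sup_diam_le u)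

/-- Proposition 4.7, identity (11): under the standing hypotheses on `f`,
`f u = f ⊥ ⊔ ◇_f u` for every `u ∈ C`. -/
theorem stmt9 {A B C D : Type*} [DistribLattice A] [BoundedOrder A]
    [DistribLattice B] [BoundedOrder B] [CompleteLattice C] [CompleteLattice D]
    (eA : A → C) (eB : B → D)
    (hceA : IsCanonicalExtension eA) (hceB : IsCanonicalExtension eB)
    (hCj : JoinPerfect C) (hCm : MeetPerfect C)
    (hDj : JoinPerfect D) (hDm : MeetPerfect D)
    (f : C → D) (hf : Monotone f)
    (hfcE : ClosedEsakia eA f) (hfoE : OpenEsakia eA f)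
    (hcl : ∀ a : A, ClosedElem eB (f (eA a)))
    (hadd : ∀ a b : A, f (eA (a ⊔ b)) ≤ f (eA a) ⊔ f (eA b)) :
    ∀ u : C, f u = f ⊥ ⊔ diam f u :=
  stmt9_general eA hceA hCj hDm f hf hfcE hfoE hadd
end

section
/- Under the standing hypotheses on g, for every u ∈ C it holds that g(u) = g(⊤) ⊓ □_g(u). (Proposition 4.7, identity (12).) -/
/-!
Fix a completely meet-prime `n ≥ g u` with `g ⊤ ≰ n`; it suffices to find a completely meet-prime
`m ≥ u` with `g m ≤ n`. Thanks to the multiplicativity of `g` on `e(A)` and the meet-primality of `n`,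
the elements `e a` with `g (e a) ≰ n` form a down-directed family of closed elements, so by the closed
Esakia property its meet `c` still satisfies `g c ≰ n`; hence `c ≰ u`. Join-perfectness gives a
completely join-prime `p ≤ c` with `p ≰ u`, and `m := ⋁ {x | p ≰ x}` is completely meet-prime and
lies above `u`. Being completely meet-prime, `m` is open, so if `g m ≰ n` the open Esakia property
yields `e a ≤ m` with `g (e a) ≰ n`; but then `p ≤ c ≤ e a ≤ m`, which is absurd.
-/

section Primes

variable {C : Type*} [CompleteLattice C]

theorem CMPrime.le_or_le_of_inf_le {n x y : C} (hn : CMPrime n) (h : x ⊓ y ≤ n) :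
    x ≤ n ∨ y ≤ n := by
  obtain ⟨s, hs, hsn⟩ := hn.2 {x, y} (by rwa [sInf_pair])
  rcases hs with rfl | rfl
  exacts [Or.inl hsn, Or.inr hsn]

theorem CJPrime.exists_cmPrime_forall_le_iff {p : C} (hp : CJPrime p) :
    ∃ m : C, CMPrime m ∧ ∀ x, x ≤ m ↔ ¬ p ≤ x := by
  set m := sSup {x | ¬ p ≤ x}
  have hle_iff : ∀ x, x ≤ m ↔ ¬ p ≤ x := fun x =>
    ⟨fun hx hpx => by
      obtain ⟨s, hs, hps⟩ := hp.2 _ (hpx.trans hx)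
      exact hs hps,
     fun hx => le_sSup hx⟩
  refine ⟨m, ⟨fun htop => (hle_iff m).1 le_rfl (htop ▸ le_top), fun S hS => ?_⟩, hle_iff⟩
  have hpS : ∃ s ∈ S, ¬ p ≤ s := by
    by_contra! h
    exact (hle_iff _).1 hS (le_sInf h)
  obtain ⟨s, hs, hps⟩ := hpS
  exact ⟨s, hs, (hle_iff s).2 hps⟩

theorem JoinPerfect.exists_cjPrime_le_not_le (hC : JoinPerfect C) {x y : C} (hxy : ¬ x ≤ y) :
    ∃ p : C, CJPrime p ∧ p ≤ x ∧ ¬ p ≤ y := by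
  by_contra! h
  exact hxy ((hC x).le.trans (sSup_le fun p ⟨hp, hpx⟩ => h p hp hpx))

end Primes

section Box

variable {C D : Type*} [CompleteLattice C] [CompleteLattice D] {g : C → D}

theorem boxg_le_of_cmPrime {u m : C} (hm : CMPrime m) (hum : u ≤ m) : boxg g u ≤ g m :=
  sInf_le ⟨m, ⟨hm, hum⟩, rfl⟩

theorem Monotone.le_boxg (hg : Monotone g) (u : C) : g u ≤ boxg g u :=
  le_sInf fun _ ⟨_, ⟨_, hum⟩, hgm⟩ => hgm ▸ hg hum

end Box

section CanonicalExtension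

variable {A C : Type*} [CompleteLattice C] {e : A → C}

theorem OpenElem.sSup_image_le_eq {o : C} (ho : OpenElem e o) :
    sSup (e '' {a | e a ≤ o}) = o := by
  refine le_antisymm (sSup_le ?_) ?_
  · rintro _ ⟨a, ha, rfl⟩
    exact ha
  · obtain ⟨S, rfl⟩ := ho
    exact sSup_le_sSup (Set.image_mono fun a ha => le_sSup (Set.mem_image_of_mem e ha))

variable [DistribLattice A] [BoundedOrder A]

theorem IsCanonicalExtension.monotone_s10 (hce : IsCanonicalExtension e) : Monotone e :=
  fun a b hab => calc
    e a = e (a ⊓ b) := by rw [inf_eq_left.2 hab]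
    _ = e a ⊓ e b := hce.map_inf a b
    _ ≤ e b := inf_le_right

theorem IsCanonicalExtension.openElem_of_cmPrime (hce : IsCanonicalExtension e) {m : C}
    (hm : CMPrime m) : OpenElem e m := by
  obtain ⟨𝒮, h𝒮⟩ := hce.dense_meetOfJoins m
  obtain ⟨_, ⟨S, hS, rfl⟩, hSm⟩ := hm.2 _ h𝒮.ge
  exact ⟨S, le_antisymm (h𝒮.le.trans (sInf_le ⟨S, hS, rfl⟩)) hSm⟩

variable {D : Type*} [CompleteLattice D] {g : C → D}

theorem OpenEsakia.exists_le_not_map_le (hce : IsCanonicalExtension e) (hg : OpenEsakia e g)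
    {o : C} (ho : OpenElem e o) {n : D} (hn : ¬ g o ≤ n) :
    ∃ a : A, e a ≤ o ∧ ¬ g (e a) ≤ n := by
  have hdir : UpDir (e '' {a | e a ≤ o}) := by
    refine ⟨⟨e ⊥, ⊥, by simp [hce.map_bot], rfl⟩, ?_⟩
    rintro _ ⟨a, ha, rfl⟩ _ ⟨b, hb, rfl⟩
    exact ⟨e (a ⊔ b), ⟨a ⊔ b, (hce.map_sup a b).trans_le (sup_le ha hb), rfl⟩,
      hce.monotone_s10 le_sup_left, hce.monotone_s10 le_sup_right⟩
  by_contra! h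
  refine hn ?_
  rw [← ho.sSup_image_le_eq, hg _ hdir (by rintro _ ⟨a, -, rfl⟩; exact ⟨{a}, by simp⟩)]
  refine sSup_le ?_
  rintro _ ⟨_, ⟨a, ha, rfl⟩, rfl⟩
  exact h a ha

theorem exists_cmPrime_ge_map_le (hce : IsCanonicalExtension e) (hC : JoinPerfect C)
    (hg : Monotone g) (hgc : ClosedEsakia e g) (hgo : OpenEsakia e g)
    (hmul : ∀ a b : A, g (e a) ⊓ g (e b) ≤ g (e (a ⊓ b)))
    {u : C} {n : D} (hn : CMPrime n) (hgu : g u ≤ n) (htop : ¬ g ⊤ ≤ n) :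
    ∃ m : C, CMPrime m ∧ u ≤ m ∧ g m ≤ n := by
  set 𝒮 := e '' {a | ¬ g (e a) ≤ n}
  have hdir : DownDir 𝒮 := by
    refine ⟨⟨e ⊤, ⊤, by simpa [hce.map_top] using htop, rfl⟩, ?_⟩
    rintro _ ⟨a, ha, rfl⟩ _ ⟨b, hb, rfl⟩
    refine ⟨e (a ⊓ b), ⟨a ⊓ b, fun hab => ?_, rfl⟩,
      hce.monotone_s10 inf_le_left, hce.monotone_s10 inf_le_right⟩
    exact (hn.le_or_le_of_inf_le ((hmul a b).trans hab)).elim ha hb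
  have hg𝒮 : ¬ g (sInf 𝒮) ≤ n := by
    rw [hgc 𝒮 hdir (by rintro _ ⟨a, -, rfl⟩; exact ⟨{a}, by simp⟩)]
    intro h
    obtain ⟨_, ⟨_, ⟨a, ha, rfl⟩, rfl⟩, han⟩ := hn.2 _ h
    exact ha han
  obtain ⟨p, hp, hp𝒮, hpu⟩ :=
    hC.exists_cjPrime_le_not_le fun h => hg𝒮 ((hg h).trans hgu)
  obtain ⟨m, hm, hle_m⟩ := hp.exists_cmPrime_forall_le_iff
  refine ⟨m, hm, (hle_m u).2 hpu, ?_⟩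
  by_contra hgm
  obtain ⟨a, ham, han⟩ := hgo.exists_le_not_map_le hce (hce.openElem_of_cmPrime hm) hgm
  exact (hle_m m).1 le_rfl ((hp𝒮.trans (sInf_le ⟨a, han, rfl⟩)).trans ham)

end CanonicalExtension

theorem stmt10_general {A C D : Type*} [DistribLattice A] [BoundedOrder A]
    [CompleteLattice C] [CompleteLattice D]
    (eA : A → C)
    (hceA : IsCanonicalExtension eA)
    (hCj : JoinPerfect C)
    (hDm : MeetPerfect D)
    (g : C → D) (hg : Monotone g)
    (hgcE : ClosedEsakia eA g) (hgoE : OpenEsakia eA g)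
    (hmul : ∀ a b : A, g (eA a) ⊓ g (eA b) ≤ g (eA (a ⊓ b))) :
    ∀ u : C, g u = g ⊤ ⊓ boxg g u := by
  intro u
  refine le_antisymm (le_inf (hg le_top) (hg.le_boxg u)) ?_
  conv_rhs => rw [hDm (g u)]
  refine le_sInf fun n ⟨hn, hgu⟩ => ?_
  by_cases htop : g ⊤ ≤ n
  · exact inf_le_left.trans htop
  · obtain ⟨m, hm, hum, hmn⟩ :=
      exists_cmPrime_ge_map_le hceA hCj hg hgcE hgoE hmul hn hgu htop
    exact inf_le_right.trans ((boxg_le_of_cmPrime hm hum).trans hmn)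

/-- Proposition 4.7, identity (12): under the standing hypotheses on `g`,
`g u = g ⊤ ⊓ □_g u` for every `u ∈ C`. -/
theorem stmt10 {A B C D : Type*} [DistribLattice A] [BoundedOrder A]
    [DistribLattice B] [BoundedOrder B] [CompleteLattice C] [CompleteLattice D]
    (eA : A → C) (eB : B → D)
    (hceA : IsCanonicalExtension eA) (hceB : IsCanonicalExtension eB)
    (hCj : JoinPerfect C) (hCm : MeetPerfect C)
    (hDj : JoinPerfect D) (hDm : MeetPerfect D)
    (g : C → D) (hg : Monotone g)
    (hgcE : ClosedEsakia eA g) (hgoE : OpenEsakia eA g)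
    (hop : ∀ a : A, OpenElem eB (g (eA a)))
    (hmul : ∀ a b : A, g (eA a) ⊓ g (eA b) ≤ g (eA (a ⊓ b))) :
    ∀ u : C, g u = g ⊤ ⊓ boxg g u :=
  stmt10_general eA hceA hCj hDm g hg hgcE hgoE hmul
end
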